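/- Let p ≥ 3 be an odd integer and q the multiplicative order of 2 modulo p. If binary words u and u′ satisfy val_p(u) = val_p(u′) and val_p(u·1) = val_p(u′·1), then |u| ≡ |u′| (mod q). (This is the insertion-of-carets step in the proof that leaves of a tree diagram in the p-colorable subgroup have lengths congruent modulo q.) -/

import Mathlib

/-- `val_p(a₁ ⋯ aₙ) = Σ_{i=1}^n aᵢ · (2⁻¹)^i ∈ ZMod p`, the reduction of
`ρ(a₁ ⋯ aₙ)` modulo `p`, defined recursively on the binary word. -/
def valp (p : ℕ) : List Bool → ZMod p
  | [] => 0
  | a :: t => ((if a then 1 else 0) + valp p t) * (2 : ZMod p)⁻¹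

lemma valp_append_true (p : ℕ) (u : List Bool) :
    valp p (u ++ [true]) = valp p u + (2 : ZMod p)⁻¹ ^ (u.length + 1) := by
  induction u with
  | nil => simp [valp]
  | cons a t ih =>
    simp only [List.cons_append, valp, ih, List.length_cons]
    ring

lemma ZMod.isUnit_two_of_odd {p : ℕ} (hodd : Odd p) : IsUnit (2 : ZMod p) := by
  exact_mod_cast (ZMod.isUnit_iff_coprime 2 p).mpr (Nat.coprime_two_left.mpr hodd)

lemma ZMod.inv_pow_eq_inv_pow_iff_modEq {n : ℕ} {a : ZMod n} (ha : IsUnit a) {k l : ℕ} :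
    a⁻¹ ^ k = a⁻¹ ^ l ↔ k ≡ l [MOD orderOf a] := by
  obtain ⟨u, rfl⟩ := ha
  rw [ZMod.inv_coe_unit, ← Units.val_pow_eq_pow_val, ← Units.val_pow_eq_pow_val, Units.val_inj,
    pow_eq_pow_iff_modEq, orderOf_inv, orderOf_units]

theorem length_modEq_of_valp_eq_general (p : ℕ) (hodd : Odd p)
    (u u' : List Bool)
    (h : valp p u = valp p u')
    (h1 : valp p (u ++ [true]) = valp p (u' ++ [true])) :
    u.length ≡ u'.length [MOD orderOf (2 : ZMod p)] := by
  rw [valp_append_true, valp_append_true, h, add_right_inj,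
    ZMod.inv_pow_eq_inv_pow_iff_modEq (ZMod.isUnit_two_of_odd hodd)] at h1
  exact Nat.ModEq.add_right_cancel' 1 h1

/-- Let `p ≥ 3` be an odd integer and `q` the multiplicative order of `2` modulo `p`.
If binary words `u` and `u′` satisfy `val_p(u) = val_p(u′)` and
`val_p(u·1) = val_p(u′·1)`, then `|u| ≡ |u′| (mod q)`. -/
theorem length_modEq_of_valp_eq (p : ℕ) (hp3 : 3 ≤ p) (hodd : Odd p)
    (u u' : List Bool)
    (h : valp p u = valp p u')
    (h1 : valp p (u ++ [true]) = valp p (u' ++ [true])) :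
    u.length ≡ u'.length [MOD orderOf (2 : ZMod p)] :=
  length_modEq_of_valp_eq_general p hodd u u' h h1
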